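/- arXiv:1605.06906 — 7 statements merged into one kernel-verified Lean document; each statement's English description precedes it below -/
import Mathlib

section
/- Let q ∈ (2,4), A > 0, Λ > 0, C > 0. Define T : [0,∞) → ℝ by T(t) = (A/2)t² + (C/4)t⁴ − (Λ/q)t^q, set t₀ = ((q−2)Λ/(2C))^(1/(4−q)) and D = A − ((4−q)/2)·Λ·((q−2)Λ/(2C))^((q−2)/(4−q)). Then: (i) if D > 0 then T has no critical point in (0,∞) and T'(t) > 0 for all t > 0; (ii) if D = 0 then t₀ is the unique critical point of T in (0,∞) and T'(t) ≥ 0 for all t > 0; (iii) if D < 0 then T has exactly two critical points t¹ < t² in (0,∞), with t¹ < t₀ < t², T''(t¹) < 0, T''(t²) > 0, and T(t¹) = max{T(t) : 0 ≤ t ≤ t₀}. -/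
open Real Set

/-!
For `t > 0` one has `T' t = t * g t` with `g t = A + C t² - Λ t^(q-2)` (`fiberMapQuot`), and
`g' t = t^(q-3) (2 C t^(4-q) - (q-2) Λ)`. Hence `g` decreases strictly on `[0, t₀]` and increases
strictly on `[t₀, ∞)`, with minimum `g t₀ = D`, while `g 0 = A > 0` and `g = A` again at
`(Λ / C)^(1/(4-q)) > t₀`. The sign of `D` therefore decides the zeros of `g`, i.e. the critical
points of `T`; at a zero `t` of `g` one has `T'' t = t g' t`, and on `[0, t₀]` the sign of `T'`
changes only at the zero `t₁` of `g`, from `+` to `-`.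
-/

namespace KirchhoffFiber

noncomputable def fiberMap (A C Λ q t : ℝ) : ℝ := A / 2 * t ^ 2 + C / 4 * t ^ 4 - Λ / q * t ^ q

noncomputable def fiberMapQuot (A C Λ q t : ℝ) : ℝ := A + C * t ^ 2 - Λ * t ^ (q - 2)

noncomputable def turningPoint (C Λ q : ℝ) : ℝ := ((q - 2) * Λ / (2 * C)) ^ ((1 : ℝ) / (4 - q))

variable {A C Λ q t : ℝ}

theorem hasDerivAt_fiberMap (hq : q ≠ 0) (ht : 0 < t) :
    HasDerivAt (fiberMap A C Λ q) (t * fiberMapQuot A C Λ q t) t := by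
  have hpow : HasDerivAt (fun x : ℝ => x ^ q) (q * t ^ (q - 1)) t :=
    hasDerivAt_rpow_const (Or.inl ht.ne')
  have hsum := (((hasDerivAt_pow 2 t).const_mul (A / 2)).add
    ((hasDerivAt_pow 4 t).const_mul (C / 4))).sub (hpow.const_mul (Λ / q))
  refine hsum.congr_deriv ?_
  rw [show q - 1 = q - 2 + 1 by ring, rpow_add_one ht.ne', fiberMapQuot]
  field_simp
  ring

theorem hasDerivAt_fiberMapQuot (ht : 0 < t) :
    HasDerivAt (fiberMapQuot A C Λ q)
      (t ^ (q - 3) * (2 * C * t ^ (4 - q) - (q - 2) * Λ)) t := by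
  have hpow : HasDerivAt (fun x : ℝ => x ^ (q - 2)) ((q - 2) * t ^ (q - 2 - 1)) t :=
    hasDerivAt_rpow_const (Or.inl ht.ne')
  have hsum := ((hasDerivAt_const t A).add ((hasDerivAt_pow 2 t).const_mul C)).sub
    (hpow.const_mul Λ)
  refine hsum.congr_deriv ?_
  have hsplit : t ^ (q - 3) * t ^ (4 - q) = t := by
    rw [← rpow_add ht, show q - 3 + (4 - q) = 1 by ring, rpow_one]
  rw [show q - 2 - 1 = q - 3 by ring]
  norm_num
  linear_combination (-2 * C) * hsplit

theorem continuous_fiberMap (hq : 0 ≤ q) : Continuous (fiberMap A C Λ q) := by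
  unfold fiberMap; fun_prop (disch := assumption)

theorem continuous_fiberMapQuot (hq : 2 ≤ q) : Continuous (fiberMapQuot A C Λ q) := by
  have : 0 ≤ q - 2 := by linarith
  unfold fiberMapQuot; fun_prop (disch := assumption)

theorem fiberMapQuot_eq (ht : 0 < t) :
    fiberMapQuot A C Λ q t = A + t ^ (q - 2) * (C * t ^ (4 - q) - Λ) := by
  have hsplit : t ^ (q - 2) * t ^ (4 - q) = t ^ 2 := by
    rw [← rpow_add ht, show q - 2 + (4 - q) = (2 : ℕ) by norm_num, rpow_natCast]
  rw [fiberMapQuot, ← hsplit]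
  ring

theorem fiberMapQuot_zero (hq : q ≠ 2) : fiberMapQuot A C Λ q 0 = A := by
  simp [fiberMapQuot, zero_rpow (sub_ne_zero.2 hq)]

theorem turningPoint_pos (hq2 : 2 < q) (hΛ : 0 < Λ) (hC : 0 < C) :
    0 < turningPoint C Λ q := by
  unfold turningPoint
  have : 0 < q - 2 := by linarith
  positivity

theorem turningPoint_rpow (hq2 : 2 < q) (hq4 : q < 4) (hΛ : 0 < Λ) (hC : 0 < C) :
    turningPoint C Λ q ^ (4 - q) = (q - 2) * Λ / (2 * C) := by
  have : 0 < q - 2 := by linarith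
  rw [turningPoint, one_div, rpow_inv_rpow (by positivity) (by linarith)]

theorem lt_turningPoint_iff (hq2 : 2 < q) (hq4 : q < 4) (hΛ : 0 < Λ) (hC : 0 < C)
    (ht : 0 ≤ t) : t < turningPoint C Λ q ↔ 2 * C * t ^ (4 - q) < (q - 2) * Λ := by
  rw [← rpow_lt_rpow_iff ht (turningPoint_pos hq2 hΛ hC).le (by linarith : (0 : ℝ) < 4 - q),
    turningPoint_rpow hq2 hq4 hΛ hC, lt_div_iff₀ (by positivity), mul_comm]

theorem turningPoint_lt_iff (hq2 : 2 < q) (hq4 : q < 4) (hΛ : 0 < Λ) (hC : 0 < C)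
    (ht : 0 ≤ t) : turningPoint C Λ q < t ↔ (q - 2) * Λ < 2 * C * t ^ (4 - q) := by
  rw [← rpow_lt_rpow_iff (turningPoint_pos hq2 hΛ hC).le ht (by linarith : (0 : ℝ) < 4 - q),
    turningPoint_rpow hq2 hq4 hΛ hC, div_lt_iff₀ (by positivity), mul_comm (t ^ (4 - q))]

theorem deriv_fiberMapQuot_neg (hq2 : 2 < q) (hq4 : q < 4) (hΛ : 0 < Λ) (hC : 0 < C)
    (ht : 0 < t) (ht₀ : t < turningPoint C Λ q) : deriv (fiberMapQuot A C Λ q) t < 0 := by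
  rw [(hasDerivAt_fiberMapQuot ht).deriv]
  exact mul_neg_of_pos_of_neg (rpow_pos_of_pos ht _)
    (sub_neg.2 ((lt_turningPoint_iff hq2 hq4 hΛ hC ht.le).1 ht₀))

theorem deriv_fiberMapQuot_pos (hq2 : 2 < q) (hq4 : q < 4) (hΛ : 0 < Λ) (hC : 0 < C)
    (ht₀ : turningPoint C Λ q < t) : 0 < deriv (fiberMapQuot A C Λ q) t := by
  have ht : 0 < t := (turningPoint_pos hq2 hΛ hC).trans ht₀
  rw [(hasDerivAt_fiberMapQuot ht).deriv]
  exact mul_pos (rpow_pos_of_pos ht _)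
    (sub_pos.2 ((turningPoint_lt_iff hq2 hq4 hΛ hC ht.le).1 ht₀))

theorem strictAntiOn_fiberMapQuot (hq2 : 2 < q) (hq4 : q < 4) (hΛ : 0 < Λ) (hC : 0 < C) :
    StrictAntiOn (fiberMapQuot A C Λ q) (Icc 0 (turningPoint C Λ q)) := by
  refine strictAntiOn_of_deriv_neg (convex_Icc _ _)
    (continuous_fiberMapQuot hq2.le).continuousOn fun t ht => ?_
  rw [interior_Icc] at ht
  exact deriv_fiberMapQuot_neg hq2 hq4 hΛ hC ht.1 ht.2

theorem strictMonoOn_fiberMapQuot (hq2 : 2 < q) (hq4 : q < 4) (hΛ : 0 < Λ) (hC : 0 < C) :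
    StrictMonoOn (fiberMapQuot A C Λ q) (Ici (turningPoint C Λ q)) := by
  refine strictMonoOn_of_deriv_pos (convex_Ici _)
    (continuous_fiberMapQuot hq2.le).continuousOn fun t ht => ?_
  rw [interior_Ici] at ht
  exact deriv_fiberMapQuot_pos hq2 hq4 hΛ hC ht

theorem fiberMapQuot_turningPoint_lt (hq2 : 2 < q) (hq4 : q < 4) (hΛ : 0 < Λ) (hC : 0 < C)
    (ht : 0 ≤ t) (hne : t ≠ turningPoint C Λ q) :
    fiberMapQuot A C Λ q (turningPoint C Λ q) < fiberMapQuot A C Λ q t := by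
  have ht₀ := (turningPoint_pos hq2 hΛ hC).le
  rcases hne.lt_or_gt with hlt | hgt
  · exact strictAntiOn_fiberMapQuot hq2 hq4 hΛ hC ⟨ht, hlt.le⟩ ⟨ht₀, le_rfl⟩ hlt
  · exact strictMonoOn_fiberMapQuot hq2 hq4 hΛ hC self_mem_Ici hgt.le hgt

theorem fiberMapQuot_turningPoint (hq2 : 2 < q) (hq4 : q < 4) (hΛ : 0 < Λ) (hC : 0 < C) :
    fiberMapQuot A C Λ q (turningPoint C Λ q) =
      A - (4 - q) / 2 * Λ * ((q - 2) * Λ / (2 * C)) ^ ((q - 2) / (4 - q)) := by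
  have hK : 0 ≤ (q - 2) * Λ / (2 * C) := by
    have : 0 < q - 2 := by linarith
    positivity
  rw [fiberMapQuot_eq (turningPoint_pos hq2 hΛ hC), turningPoint_rpow hq2 hq4 hΛ hC,
    turningPoint, ← rpow_mul hK, one_div_mul_eq_div]
  field_simp
  ring

theorem exists_turningPoint_lt_fiberMapQuot_pos (hq2 : 2 < q) (hq4 : q < 4) (hA : 0 < A)
    (hΛ : 0 < Λ) (hC : 0 < C) :
    ∃ t, turningPoint C Λ q < t ∧ 0 < fiberMapQuot A C Λ q t := by
  have h4q : 0 < 4 - q := by linarith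
  have hq2' : 0 < q - 2 := by linarith
  -- at `t := (Λ / C) ^ (1 / (4 - q))` the last two terms of `fiberMapQuot_eq` cancel
  refine ⟨(Λ / C) ^ ((1 : ℝ) / (4 - q)), ?_, ?_⟩
  · refine rpow_lt_rpow (by positivity) ?_ (by positivity)
    rw [div_lt_div_iff₀ (by positivity) hC]
    nlinarith [mul_pos hΛ hC]
  · rw [fiberMapQuot_eq (by positivity), one_div, rpow_inv_rpow (by positivity) h4q.ne',
      mul_div_cancel₀ _ hC.ne', sub_self, mul_zero, add_zero]
    exact hA


theorem exists_fiberMapQuot_eq_zero (hq2 : 2 < q) (hq4 : q < 4) (hA : 0 < A) (hΛ : 0 < Λ)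
    (hC : 0 < C) (hneg : fiberMapQuot A C Λ q (turningPoint C Λ q) < 0) :
    ∃ t₁ t₂, 0 < t₁ ∧ t₁ < turningPoint C Λ q ∧ turningPoint C Λ q < t₂ ∧
      fiberMapQuot A C Λ q t₁ = 0 ∧ fiberMapQuot A C Λ q t₂ = 0 ∧
      ∀ t, 0 < t → fiberMapQuot A C Λ q t = 0 → t = t₁ ∨ t = t₂ := by
  set g := fiberMapQuot A C Λ q
  set t₀ := turningPoint C Λ q
  have ht₀ : 0 < t₀ := turningPoint_pos hq2 hΛ hC
  have hg : ContinuousOn g (Icc 0 t₀) := (continuous_fiberMapQuot hq2.le).continuousOn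
  have hzero_left : (0 : ℝ) ∈ Ioo (g t₀) (g 0) := ⟨hneg, by rwa [show g 0 = A from fiberMapQuot_zero hq2.ne']⟩
  obtain ⟨t₁, ⟨ht₁, ht₁₀⟩, hg₁⟩ := intermediate_value_Ioo' ht₀.le hg hzero_left
  obtain ⟨M, hM, hgM⟩ := exists_turningPoint_lt_fiberMapQuot_pos hq2 hq4 hA hΛ hC
  obtain ⟨t₂, ⟨ht₀₂, -⟩, hg₂⟩ := intermediate_value_Ioo hM.le
    (continuous_fiberMapQuot hq2.le).continuousOn ⟨hneg, hgM⟩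
  refine ⟨t₁, t₂, ht₁, ht₁₀, ht₀₂, hg₁, hg₂, fun t ht hgt => ?_⟩
  rcases le_or_gt t t₀ with hle | hlt
  · exact .inl <| (strictAntiOn_fiberMapQuot hq2 hq4 hΛ hC).injOn ⟨ht.le, hle⟩
      ⟨ht₁.le, ht₁₀.le⟩ (hgt.trans hg₁.symm)
  · exact .inr <| (strictMonoOn_fiberMapQuot hq2 hq4 hΛ hC).injOn hlt.le ht₀₂.le
      (hgt.trans hg₂.symm)

theorem deriv_fiberMap (hq : q ≠ 0) (ht : 0 < t) :
    deriv (fiberMap A C Λ q) t = t * fiberMapQuot A C Λ q t :=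
  (hasDerivAt_fiberMap hq ht).deriv

theorem deriv_deriv_fiberMap (hq : q ≠ 0) (ht : 0 < t) (hg : fiberMapQuot A C Λ q t = 0) :
    deriv (deriv (fiberMap A C Λ q)) t = t * deriv (fiberMapQuot A C Λ q) t := by
  have hT' : deriv (fiberMap A C Λ q) =ᶠ[nhds t] fun s => s * fiberMapQuot A C Λ q s := by
    filter_upwards [Ioi_mem_nhds ht] with s hs using deriv_fiberMap hq hs
  have hprod : HasDerivAt (fun s => s * fiberMapQuot A C Λ q s)
      (1 * fiberMapQuot A C Λ q t + t * deriv (fiberMapQuot A C Λ q) t) t :=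
    (hasDerivAt_id' t).mul (hasDerivAt_fiberMapQuot ht).differentiableAt.hasDerivAt
  rw [hT'.deriv_eq, hprod.deriv, hg]
  ring

theorem isMaxOn_fiberMap (hq2 : 2 < q) (hq4 : q < 4) (hΛ : 0 < Λ) (hC : 0 < C) {t₁ : ℝ}
    (ht₁ : 0 < t₁) (ht₁₀ : t₁ < turningPoint C Λ q) (hg : fiberMapQuot A C Λ q t₁ = 0) :
    IsMaxOn (fiberMap A C Λ q) (Icc 0 (turningPoint C Λ q)) t₁ := by
  have hq : q ≠ 0 := by positivity
  have hT : Continuous (fiberMap A C Λ q) := continuous_fiberMap (by linarith)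
  have hg_anti := strictAntiOn_fiberMapQuot (A := A) hq2 hq4 hΛ hC
  have hmono : MonotoneOn (fiberMap A C Λ q) (Icc 0 t₁) := by
    refine (strictMonoOn_of_deriv_pos (convex_Icc _ _) hT.continuousOn fun t ht => ?_).monotoneOn
    rw [interior_Icc] at ht
    rw [deriv_fiberMap hq ht.1]
    exact mul_pos ht.1 (hg ▸ hg_anti ⟨ht.1.le, (ht.2.trans ht₁₀).le⟩ ⟨ht₁.le, ht₁₀.le⟩ ht.2)
  have hanti : AntitoneOn (fiberMap A C Λ q) (Icc t₁ (turningPoint C Λ q)) := by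
    refine (strictAntiOn_of_deriv_neg (convex_Icc _ _) hT.continuousOn fun t ht => ?_).antitoneOn
    rw [interior_Icc] at ht
    have ht0 : 0 < t := ht₁.trans ht.1
    rw [deriv_fiberMap hq ht0]
    exact mul_neg_of_pos_of_neg ht0 (hg ▸ hg_anti ⟨ht₁.le, ht₁₀.le⟩ ⟨ht0.le, ht.2.le⟩ ht.1)
  intro t ⟨ht0, ht⟩
  rcases le_total t t₁ with hle | hge
  · exact hmono ⟨ht0, hle⟩ ⟨ht₁.le, le_rfl⟩ hle
  · exact hanti ⟨le_rfl, ht₁₀.le⟩ ⟨hge, ht⟩ hge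


end KirchhoffFiber

open KirchhoffFiber in
/-- For `q ∈ (2,4)`, `A, Λ, C > 0`, the fibering map
`T t = (A/2)t² + (C/4)t⁴ − (Λ/q)t^q`, with `t₀ = ((q−2)Λ/(2C))^(1/(4−q))` and
`D = A − ((4−q)/2)·Λ·((q−2)Λ/(2C))^((q−2)/(4−q))`, satisfies:
(i) if `D > 0` then `T` has no critical point in `(0,∞)` and `T' > 0` on `(0,∞)`;
(ii) if `D = 0` then `t₀` is the unique critical point in `(0,∞)` and `T' ≥ 0` there;
(iii) if `D < 0` then `T` has exactly two critical points `t₁ < t₀ < t₂` in `(0,∞)`,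
with `T''(t₁) < 0`, `T''(t₂) > 0`, and `T t₁ = max {T t : 0 ≤ t ≤ t₀}`. -/
theorem stmt_1 (q A Λ C : ℝ) (hq2 : 2 < q) (hq4 : q < 4)
    (hA : 0 < A) (hΛ : 0 < Λ) (hC : 0 < C) :
    let T : ℝ → ℝ := fun t => A / 2 * t ^ 2 + C / 4 * t ^ 4 - Λ / q * t ^ q
    let t₀ : ℝ := ((q - 2) * Λ / (2 * C)) ^ ((1 : ℝ) / (4 - q))
    let D : ℝ := A - (4 - q) / 2 * Λ * ((q - 2) * Λ / (2 * C)) ^ ((q - 2) / (4 - q))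
    (0 < D → (∀ t : ℝ, 0 < t → deriv T t ≠ 0) ∧ (∀ t : ℝ, 0 < t → 0 < deriv T t)) ∧
    (D = 0 → (∀ t : ℝ, 0 < t → (deriv T t = 0 ↔ t = t₀)) ∧ (∀ t : ℝ, 0 < t → 0 ≤ deriv T t)) ∧
    (D < 0 → ∃ t₁ t₂ : ℝ, 0 < t₁ ∧ t₁ < t₀ ∧ t₀ < t₂ ∧
      deriv T t₁ = 0 ∧ deriv T t₂ = 0 ∧
      (∀ t : ℝ, 0 < t → deriv T t = 0 → t = t₁ ∨ t = t₂) ∧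
      deriv (deriv T) t₁ < 0 ∧ 0 < deriv (deriv T) t₂ ∧
      (∀ t ∈ Icc (0 : ℝ) t₀, T t ≤ T t₁)) := by
  intro T t₀ D
  have hq : q ≠ 0 := by positivity
  have hT' (t : ℝ) (ht : 0 < t) : deriv T t = t * fiberMapQuot A C Λ q t :=
    deriv_fiberMap hq ht
  have hD : fiberMapQuot A C Λ q t₀ = D := fiberMapQuot_turningPoint hq2 hq4 hΛ hC
  have hmin (t : ℝ) (ht : 0 < t) : D ≤ fiberMapQuot A C Λ q t := by
    rcases eq_or_ne t t₀ with rfl | hne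
    · exact hD.ge
    · exact hD ▸ (fiberMapQuot_turningPoint_lt hq2 hq4 hΛ hC ht.le hne).le
  refine ⟨fun hpos => ?_, fun hzero => ?_, fun hneg => ?_⟩
  · have hT'_pos (t : ℝ) (ht : 0 < t) : 0 < deriv T t :=
      hT' t ht ▸ mul_pos ht (hpos.trans_le (hmin t ht))
    exact ⟨fun t ht => (hT'_pos t ht).ne', hT'_pos⟩
  · refine ⟨fun t ht => ?_, fun t ht => hT' t ht ▸ mul_nonneg ht.le (hzero ▸ hmin t ht)⟩
    rw [hT' t ht, mul_eq_zero, or_iff_right ht.ne', ← hzero, ← hD]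
    exact ⟨fun h => by_contra fun hne =>
      (fiberMapQuot_turningPoint_lt hq2 hq4 hΛ hC ht.le hne).ne' h, fun h => h ▸ rfl⟩
  · obtain ⟨t₁, t₂, ht₁, ht₁₀, ht₀₂, hg₁, hg₂, hzeros⟩ :=
      exists_fiberMapQuot_eq_zero hq2 hq4 hA hΛ hC (hD ▸ hneg)
    have ht₂ : 0 < t₂ := (turningPoint_pos hq2 hΛ hC).trans ht₀₂
    refine ⟨t₁, t₂, ht₁, ht₁₀, ht₀₂, by rw [hT' t₁ ht₁, hg₁, mul_zero],
      by rw [hT' t₂ ht₂, hg₂, mul_zero], fun t ht h => hzeros t ht ?_, ?_, ?_,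
      isMaxOn_iff.1 (isMaxOn_fiberMap hq2 hq4 hΛ hC ht₁ ht₁₀ hg₁)⟩
    · exact (mul_eq_zero.1 (hT' t ht ▸ h)).resolve_left ht.ne'
    · exact (deriv_deriv_fiberMap hq ht₁ hg₁).trans_lt
        (mul_neg_of_pos_of_neg ht₁ (deriv_fiberMapQuot_neg hq2 hq4 hΛ hC ht₁ ht₁₀))
    · exact (mul_pos ht₂ (deriv_fiberMapQuot_pos hq2 hq4 hΛ hC ht₀₂)).trans_eq
        (deriv_deriv_fiberMap hq ht₂ hg₂).symm
end

section
/- Let p ∈ (2,4), A > 0, B > 0, M > 0 and set t̃ = ((p−2)M/(2B))^(1/(4−p)). Define T : [0,∞) → ℝ by T(t) = (A/2)t² + (B/4)t⁴ − (M/p)t^p. If A − ((4−p)/2)·M·((p−2)M/(2B))^((p−2)/(4−p)) < 0, then T has a unique critical point t* in the open interval (0, t̃), this t* satisfies T''(t*) < 0, and T(t*) = max{T(t) : 0 ≤ t ≤ t̃}. -/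
open Real Set

/-!
Write `T'(t) = t g(t)` with `g(t) = A + B t² − M t^(p−2)`. Since
`g'(t) = t^(p−3) (2B t^(4−p) − (p−2)M)`, the function `g` is strictly decreasing on
`[0, t̃]`; it starts at `g(0) = A > 0`, and the hypothesis says exactly that `g(t̃) < 0`.
So `g` has a unique zero `t*` in `(0, t̃)`, `T` increases before it and decreases after it,
and `T''(t*) = g(t*) + t* g'(t*) = t* g'(t*) < 0`.
-/

lemma isMaxOn_Icc_of_deriv_pos_of_deriv_neg {f : ℝ → ℝ} {a b c : ℝ} (hc : c ∈ Icc a b)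
    (hf : ContinuousOn f (Icc a b)) (hpos : ∀ x ∈ Ioo a c, 0 < deriv f x)
    (hneg : ∀ x ∈ Ioo c b, deriv f x < 0) : IsMaxOn f (Icc a b) c := by
  have hmono : MonotoneOn f (Icc a c) :=
    (strictMonoOn_of_deriv_pos (convex_Icc a c) (hf.mono (Icc_subset_Icc_right hc.2))
      (by rwa [interior_Icc])).monotoneOn
  have hanti : AntitoneOn f (Icc c b) :=
    (strictAntiOn_of_deriv_neg (convex_Icc c b) (hf.mono (Icc_subset_Icc_left hc.1))
      (by rwa [interior_Icc])).antitoneOn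
  intro x hx
  rcases le_total x c with hxc | hcx
  · exact hmono ⟨hx.1, hxc⟩ ⟨hc.1, le_rfl⟩ hxc
  · exact hanti ⟨le_rfl, hc.2⟩ ⟨hcx, hx.2⟩ hcx

namespace Kirchhoff

noncomputable def fibering (A B M p t : ℝ) : ℝ := A / 2 * t ^ 2 + B / 4 * t ^ 4 - M / p * t ^ p

/-- `T'(t) / t` for the fibering map `T`. -/
noncomputable def reducedDeriv (A B M p t : ℝ) : ℝ := A + B * t ^ 2 - M * t ^ (p - 2)

/-- The paper's `t̃`. -/
noncomputable def threshold (B M p : ℝ) : ℝ := ((p - 2) * M / (2 * B)) ^ ((1 : ℝ) / (4 - p))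

variable {A B M p : ℝ}

lemma hasDerivAt_fibering (hp : 1 < p) (t : ℝ) :
    HasDerivAt (fibering A B M p) (t * reducedDeriv A B M p t) t := by
  have hpow : t ^ (p - 1) = t * t ^ (p - 2) := by
    rcases eq_or_ne t 0 with rfl | ht
    · rw [zero_rpow (by linarith), zero_mul]
    · rw [show p - 1 = p - 2 + 1 by ring, rpow_add_one ht, mul_comm]
  have hT := ((((hasDerivAt_pow 2 t).const_mul (A / 2)).add
    ((hasDerivAt_pow 4 t).const_mul (B / 4))).sub
      ((hasDerivAt_rpow_const (p := p) (Or.inr hp.le)).const_mul (M / p)))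
  refine hT.congr_deriv ?_
  rw [hpow, reducedDeriv]
  field_simp
  ring

lemma deriv_fibering (hp : 1 < p) :
    deriv (fibering A B M p) = fun t => t * reducedDeriv A B M p t :=
  funext fun t => (hasDerivAt_fibering hp t).deriv

lemma continuous_reducedDeriv (hp : 2 ≤ p) : Continuous (reducedDeriv A B M p) := by
  unfold reducedDeriv
  have := continuous_rpow_const (q := p - 2) (by linarith)
  fun_prop

lemma hasDerivAt_reducedDeriv {t : ℝ} (ht : t ≠ 0) :
    HasDerivAt (reducedDeriv A B M p) (2 * B * t - (p - 2) * M * t ^ (p - 3)) t := by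
  have hg := (((hasDerivAt_pow 2 t).const_mul B).const_add A).sub
    ((hasDerivAt_rpow_const (p := p - 2) (Or.inl ht)).const_mul M)
  refine hg.congr_deriv ?_
  ring_nf

lemma reducedDeriv_zero (hp : p ≠ 2) : reducedDeriv A B M p 0 = A := by
  simp [reducedDeriv, zero_rpow (sub_ne_zero.mpr hp)]

lemma reducedDeriv_threshold (hp2 : 2 ≤ p) (hp4 : p < 4) (hB : 0 < B) (hM : 0 ≤ M) :
    reducedDeriv A B M p (threshold B M p) =
      A - (4 - p) / 2 * M * ((p - 2) * M / (2 * B)) ^ ((p - 2) / (4 - p)) := by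
  set C := (p - 2) * M / (2 * B)
  have hC : 0 ≤ C := div_nonneg (mul_nonneg (by linarith) hM) (by linarith)
  have hBC : B * C = (p - 2) * M / 2 := by unfold C; field_simp
  have h4p : 4 - p ≠ 0 := by linarith
  have hpow : ∀ e : ℝ, threshold B M p ^ e = C ^ (e / (4 - p)) := fun e => by
    rw [threshold, ← rpow_mul hC, one_div_mul_eq_div]
  have hsq : threshold B M p ^ (2 : ℕ) = C * C ^ ((p - 2) / (4 - p)) := by
    rw [← rpow_natCast, hpow, ← rpow_one_add' hC]
    · congr 1; field_simp; push_cast; ring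
    · have : 0 ≤ (p - 2) / (4 - p) := div_nonneg (by linarith) (by linarith)
      linarith
  rw [reducedDeriv, hsq, hpow, ← mul_assoc, hBC]
  ring

lemma deriv_reducedDeriv_neg (hp2 : 2 ≤ p) (hp4 : p < 4) (hB : 0 < B) (hM : 0 ≤ M) {t : ℝ}
    (ht : 0 < t) (htt : t < threshold B M p) : deriv (reducedDeriv A B M p) t < 0 := by
  have hC : 0 ≤ (p - 2) * M / (2 * B) := div_nonneg (mul_nonneg (by linarith) hM) (by linarith)
  have hlt : 2 * B * t ^ (4 - p) < (p - 2) * M := by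
    rwa [threshold, one_div, lt_rpow_inv_iff_of_pos ht.le hC (by linarith),
      lt_div_iff₀' (by positivity)] at htt
  have hsplit : t = t ^ (4 - p) * t ^ (p - 3) := by
    rw [← rpow_add ht, show 4 - p + (p - 3) = 1 by ring, rpow_one]
  calc deriv (reducedDeriv A B M p) t
      = (2 * B * t ^ (4 - p) - (p - 2) * M) * t ^ (p - 3) := by
        rw [(hasDerivAt_reducedDeriv ht.ne').deriv]
        nth_rewrite 1 [hsplit]
        ring
    _ < 0 := mul_neg_of_neg_of_pos (by linarith) (rpow_pos_of_pos ht _)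

lemma strictAntiOn_reducedDeriv (hp2 : 2 ≤ p) (hp4 : p < 4) (hB : 0 < B) (hM : 0 ≤ M) :
    StrictAntiOn (reducedDeriv A B M p) (Icc 0 (threshold B M p)) := by
  refine strictAntiOn_of_deriv_neg (convex_Icc _ _) (continuous_reducedDeriv hp2).continuousOn ?_
  rw [interior_Icc]
  exact fun t ht => deriv_reducedDeriv_neg hp2 hp4 hB hM ht.1 ht.2

end Kirchhoff

open Kirchhoff in
/-- For `p ∈ (2,4)`, `A, B, M > 0`, `t̃ = ((p−2)M/(2B))^(1/(4−p))` and
`T t = (A/2)t² + (B/4)t⁴ − (M/p)t^p`, if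
`A − ((4−p)/2)·M·((p−2)M/(2B))^((p−2)/(4−p)) < 0` then `T` has a unique critical point
`t*` in `(0, t̃)`, with `T''(t*) < 0` and `T t* = max {T t : 0 ≤ t ≤ t̃}`. -/
theorem stmt_3 (p A B M : ℝ) (hp2 : 2 < p) (hp4 : p < 4)
    (hA : 0 < A) (hB : 0 < B) (hM : 0 < M)
    (h : A - (4 - p) / 2 * M * ((p - 2) * M / (2 * B)) ^ ((p - 2) / (4 - p)) < 0) :
    let T : ℝ → ℝ := fun t => A / 2 * t ^ 2 + B / 4 * t ^ 4 - M / p * t ^ p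
    let tt : ℝ := ((p - 2) * M / (2 * B)) ^ ((1 : ℝ) / (4 - p))
    ∃ ts : ℝ, 0 < ts ∧ ts < tt ∧ deriv T ts = 0 ∧
      (∀ t : ℝ, 0 < t → t < tt → deriv T t = 0 → t = ts) ∧
      deriv (deriv T) ts < 0 ∧
      (∀ t ∈ Icc (0 : ℝ) tt, T t ≤ T ts) := by
  intro T tt
  set g := reducedDeriv A B M p
  have hT : deriv T = fun t => t * g t := deriv_fibering (by linarith)
  have hanti := strictAntiOn_reducedDeriv (A := A) hp2.le hp4 hB hM.le
  obtain ⟨ts, ⟨hts0, htstt⟩, hgts⟩ : ∃ ts ∈ Ioo 0 tt, g ts = 0 :=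
    intermediate_value_Ioo' (rpow_pos_of_pos (by positivity) _).le
      (continuous_reducedDeriv hp2.le).continuousOn
      ⟨(reducedDeriv_threshold hp2.le hp4 hB hM.le).trans_lt h,
        (reducedDeriv_zero hp2.ne').trans_gt hA⟩
  have hts : ts ∈ Icc 0 tt := ⟨hts0.le, htstt.le⟩
  refine ⟨ts, hts0, htstt, by simp [hT, hgts], fun t ht htt hd => ?_, ?_, ?_⟩
  · rw [hT] at hd
    have hgt : g t = 0 := (mul_eq_zero.mp hd).resolve_left ht.ne'
    exact hanti.injOn ⟨ht.le, htt.le⟩ hts (hgt.trans hgts.symm)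
  · have hT' : HasDerivAt (fun t => t * g t) (1 * g ts + ts * deriv g ts) ts :=
      (hasDerivAt_id ts).mul (hasDerivAt_reducedDeriv hts0.ne').differentiableAt.hasDerivAt
    rw [hT, hT'.deriv, hgts]
    simpa using mul_neg_of_pos_of_neg hts0 (deriv_reducedDeriv_neg hp2.le hp4 hB hM.le hts0 htstt)
  · refine isMaxOn_iff.mp (isMaxOn_Icc_of_deriv_pos_of_deriv_neg hts
      (fun t _ => (hasDerivAt_fibering (by linarith) t).continuousAt.continuousWithinAt) ?_ ?_)
    · rintro t ⟨ht0, htts⟩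
      rw [hT]
      exact mul_pos ht0 (hgts ▸ hanti ⟨ht0.le, htts.le.trans hts.2⟩ hts htts)
    · rintro t ⟨htst, htt⟩
      rw [hT]
      have ht0 : 0 < t := hts0.trans htst
      exact mul_neg_of_pos_of_neg ht0 (hgts ▸ hanti hts ⟨ht0.le, htt.le⟩ htst)
end

section
/- Let 2 < q < p < 4, B > 0, Λ > 0 and M > 0, and set t̃₀ = ((p−2)(p−q)M/(2(4−q)B))^(1/(4−p)). Define T₁ : (0,∞) → ℝ by T₁(t) = B·t² − Λ·t^(q−2) − M·t^(p−2). Then T₁ has a unique critical point t̃₁ in (0,∞), t̃₁ > t̃₀, T₁ is strictly decreasing on (0, t̃₁) and strictly increasing on (t̃₁, ∞), and the minimum value satisfies min T₁ = T₁(t̃₁) ≤ T₁(t̃₀) = −((4−p)(p+2−q)/(2(4−q)))·M·((p−2)(p−q)M/(2(4−q)B))^((p−2)/(4−p)) − Λ·((p−2)(p−q)M/(2(4−q)B))^((q−2)/(4−p)). -/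
open Real Set Filter Topology

/-!
Write `g t = Λ (q - 2) t ^ (q - 4) + M (p - 2) t ^ (p - 4)`, so that
`T₁' t = t (2B - g t)`. Both exponents of `g` are negative and both coefficients positive,
so `g` decreases strictly from `+∞` to `0` on `(0, ∞)`: `T₁'` changes sign exactly once,
from negative to positive, at the unique `t̃₁` with `g t̃₁ = 2B`. At `t̃₀` the `M`-term alone
is `M (p - 2) t̃₀ ^ (p - 4) = 2 (4 - q) B / (p - q)`, which exceeds `2B` because `p < 4`;
hence `g t̃₀ > 2B` and `t̃₁ > t̃₀`.
-/

theorem exists_gt_eq_of_continuousOn_Ici_of_tendsto {f : ℝ → ℝ} {a c l : ℝ}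
    (hf : ContinuousOn f (Ici a)) (hfa : c < f a) (hlim : Tendsto f atTop (𝓝 l)) (hl : l < c) :
    ∃ b ∈ Ioi a, f b = c := by
  obtain ⟨b, hab, hfb⟩ := ((eventually_ge_atTop a).and (hlim.eventually_lt_const hl)).exists
  obtain ⟨x, hx, hfx⟩ :=
    intermediate_value_Icc' hab (hf.mono Icc_subset_Ici_self) ⟨hfb.le, hfa.le⟩
  refine ⟨x, lt_of_le_of_ne hx.1 ?_, hfx⟩
  rintro rfl
  exact hfa.ne' hfx

section SignChange

variable {f g : ℝ → ℝ} {c t₁ : ℝ}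
  (hf : ∀ t > 0, HasDerivAt f (t * (c - g t)) t) (hg : StrictAntiOn g (Ioi 0))
  (ht₁ : 0 < t₁) (hgt₁ : g t₁ = c)
include hf hg ht₁ hgt₁

theorem deriv_eq_zero_iff_of_hasDerivAt_mul_sub {t : ℝ} (ht : 0 < t) :
    deriv f t = 0 ↔ t = t₁ := by
  rw [(hf t ht).deriv, mul_eq_zero, or_iff_right ht.ne', sub_eq_zero, eq_comm, ← hgt₁]
  exact hg.injOn.eq_iff ht ht₁

theorem strictAntiOn_Ioc_of_hasDerivAt_mul_sub : StrictAntiOn f (Ioc 0 t₁) := by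
  refine strictAntiOn_of_deriv_neg (convex_Ioc 0 t₁)
    (fun t ht => (hf t ht.1).continuousAt.continuousWithinAt) fun t ht => ?_
  rw [interior_Ioc] at ht
  have hgt : c < g t := hgt₁ ▸ hg ht.1 ht₁ ht.2
  rw [(hf t ht.1).deriv]
  exact mul_neg_of_pos_of_neg ht.1 (sub_neg.2 hgt)

theorem strictMonoOn_Ici_of_hasDerivAt_mul_sub : StrictMonoOn f (Ici t₁) := by
  refine strictMonoOn_of_deriv_pos (convex_Ici t₁)
    (fun t ht => (hf t (ht₁.trans_le ht)).continuousAt.continuousWithinAt) fun t ht => ?_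
  rw [interior_Ici] at ht
  have ht0 : 0 < t := ht₁.trans ht
  have hgt : g t < c := hgt₁ ▸ hg ht₁ ht0 ht
  rw [(hf t ht0).deriv]
  exact mul_pos ht0 (sub_pos.2 hgt)

theorem isMinOn_Ioi_of_hasDerivAt_mul_sub : IsMinOn f (Ioi 0) t₁ := by
  intro t (ht : 0 < t)
  rcases le_total t t₁ with htt₁ | htt₁
  · exact strictAntiOn_Ioc_of_hasDerivAt_mul_sub hf hg ht₁ hgt₁ |>.antitoneOn
      ⟨ht, htt₁⟩ ⟨ht₁, le_rfl⟩ htt₁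
  · exact strictMonoOn_Ici_of_hasDerivAt_mul_sub hf hg ht₁ hgt₁ |>.monotoneOn
      self_mem_Ici htt₁ htt₁

end SignChange

theorem rpow_one_div_rpow_eq_rpow_div {a : ℝ} (ha : 0 ≤ a) (s r : ℝ) :
    (a ^ (1 / s)) ^ r = a ^ (r / s) := by
  rw [← rpow_mul ha, one_div_mul_eq_div]

theorem strictAntiOn_const_mul_rpow {c r : ℝ} (hc : 0 < c) (hr : r < 0) :
    StrictAntiOn (fun t : ℝ => c * t ^ r) (Ioi 0) :=
  fun _ hx _ _ hxy => mul_lt_mul_of_pos_left (rpow_lt_rpow_of_neg hx hxy hr) hc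

noncomputable def fiberingMap (B Λ M q p t : ℝ) : ℝ :=
  B * t ^ 2 - Λ * t ^ (q - 2) - M * t ^ (p - 2)

noncomputable def fiberingSlope (Λ M q p t : ℝ) : ℝ :=
  Λ * (q - 2) * t ^ (q - 4) + M * (p - 2) * t ^ (p - 4)

noncomputable def fiberingScale (B M q p : ℝ) : ℝ := (p - 2) * (p - q) * M / (2 * (4 - q) * B)

section Fibering

variable {B Λ M q p : ℝ}

theorem hasDerivAt_fiberingMap {t : ℝ} (ht : 0 < t) :
    HasDerivAt (fiberingMap B Λ M q p) (t * (2 * B - fiberingSlope Λ M q p t)) t := by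
  have hsq : HasDerivAt (fun t : ℝ => t ^ 2) (2 * t) t := by
    simpa using hasDerivAt_pow 2 t
  have hrpow (r : ℝ) : HasDerivAt (fun t : ℝ => t ^ r) (r * (t ^ (r - 2) * t)) t := by
    convert hasDerivAt_rpow_const (p := r) (Or.inl ht.ne') using 2
    rw [← rpow_add_one ht.ne']
    ring_nf
  refine (((hsq.const_mul B).sub ((hrpow (q - 2)).const_mul Λ)).sub
    ((hrpow (p - 2)).const_mul M)).congr_deriv ?_
  simp only [fiberingSlope, show ∀ r : ℝ, r - 2 - 2 = r - 4 from fun r => by ring]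
  ring

theorem continuousOn_fiberingSlope : ContinuousOn (fiberingSlope Λ M q p) (Ioi 0) := by
  intro t (ht : 0 < t)
  unfold fiberingSlope
  exact ((continuousAt_const.mul (continuousAt_rpow_const t _ (Or.inl ht.ne'))).add
    (continuousAt_const.mul (continuousAt_rpow_const t _ (Or.inl ht.ne')))).continuousWithinAt

theorem strictAntiOn_fiberingSlope (hq : 2 < q) (hq4 : q < 4) (hp : 2 < p) (hp4 : p < 4)
    (hΛ : 0 < Λ) (hM : 0 < M) : StrictAntiOn (fiberingSlope Λ M q p) (Ioi 0) :=
  (strictAntiOn_const_mul_rpow (mul_pos hΛ (sub_pos.2 hq)) (sub_neg.2 hq4)).add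
    (strictAntiOn_const_mul_rpow (mul_pos hM (sub_pos.2 hp)) (sub_neg.2 hp4))

theorem tendsto_fiberingSlope_atTop (hq4 : q < 4) (hp4 : p < 4) :
    Tendsto (fiberingSlope Λ M q p) atTop (𝓝 0) := by
  have hlim {r : ℝ} (hr : r < 4) : Tendsto (fun t : ℝ => t ^ (r - 4)) atTop (𝓝 0) := by
    simpa using tendsto_rpow_neg_atTop (y := 4 - r) (by linarith)
  unfold fiberingSlope
  simpa using ((hlim hq4).const_mul (Λ * (q - 2))).add ((hlim hp4).const_mul (M * (p - 2)))

theorem fiberingScale_pos (hq : 2 < q) (hqp : q < p) (hp : p < 4) (hB : 0 < B) (hM : 0 < M) :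
    0 < fiberingScale B M q p := by
  have : 0 < (p - 2) * (p - q) := mul_pos (by linarith) (by linarith)
  have : 0 < 4 - q := by linarith
  unfold fiberingScale
  positivity

theorem two_mul_lt_fiberingSlope_fiberingScale_rpow (hq : 2 < q) (hqp : q < p) (hp : p < 4)
    (hB : 0 < B) (hΛ : 0 < Λ) (hM : 0 < M) :
    2 * B < fiberingSlope Λ M q p (fiberingScale B M q p ^ ((1 : ℝ) / (4 - p))) := by
  set A := fiberingScale B M q p with hA_def
  have hA : 0 < A := fiberingScale_pos hq hqp hp hB hM
  have hΛterm : 0 < Λ * (q - 2) * (A ^ ((1 : ℝ) / (4 - p))) ^ (q - 4) :=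
    mul_pos (mul_pos hΛ (by linarith)) (rpow_pos_of_pos (rpow_pos_of_pos hA _) _)
  have hMterm :
      M * (p - 2) * (A ^ ((1 : ℝ) / (4 - p))) ^ (p - 4) = 2 * (4 - q) * B / (p - q) := by
    have hexp : (p - 4) / (4 - p) = -1 := by field_simp [(by linarith : 4 - p ≠ 0)]; ring
    rw [rpow_one_div_rpow_eq_rpow_div hA.le, hexp, rpow_neg_one, hA_def, fiberingScale, inv_div]
    field_simp [show p - 2 ≠ 0 by linarith]
  have hMlt : 2 * B < 2 * (4 - q) * B / (p - q) := by
    rw [lt_div_iff₀ (by linarith)]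
    nlinarith
  unfold fiberingSlope
  linarith

theorem fiberingMap_rpow_one_div (hp : p ≠ 4) {A : ℝ} (hA : 0 < A) :
    fiberingMap B Λ M q p (A ^ ((1 : ℝ) / (4 - p))) =
      (B * A - M) * A ^ ((p - 2) / (4 - p)) - Λ * A ^ ((q - 2) / (4 - p)) := by
  have hexp : (2 : ℝ) / (4 - p) = 1 + (p - 2) / (4 - p) := by
    field_simp [sub_ne_zero.2 hp.symm]
    ring
  rw [fiberingMap, ← rpow_natCast, Nat.cast_ofNat]
  simp only [rpow_one_div_rpow_eq_rpow_div hA.le]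
  rw [hexp, rpow_add hA, rpow_one]
  ring

theorem mul_fiberingScale_sub (hq : q ≠ 4) (hB : B ≠ 0) :
    B * fiberingScale B M q p - M = -((4 - p) * (p + 2 - q) / (2 * (4 - q))) * M := by
  unfold fiberingScale
  field_simp [sub_ne_zero.2 hq.symm]
  ring

end Fibering

/-- For `2 < q < p < 4`, `B, Λ, M > 0` and
`t̃₀ = ((p−2)(p−q)M/(2(4−q)B))^(1/(4−p))`, the function
`T₁ t = B·t² − Λ·t^(q−2) − M·t^(p−2)` has a unique critical point `t̃₁` in `(0,∞)`,
`t̃₁ > t̃₀`, `T₁` is strictly decreasing on `(0, t̃₁)` and strictly increasing on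
`(t̃₁, ∞)`, and `min T₁ = T₁(t̃₁) ≤ T₁(t̃₀)`, where `T₁(t̃₀)` equals the displayed
explicit value. -/
theorem stmt_5 (q p B Λ M : ℝ) (hq : 2 < q) (hqp : q < p) (hp : p < 4)
    (hB : 0 < B) (hΛ : 0 < Λ) (hM : 0 < M) :
    let T₁ : ℝ → ℝ := fun t => B * t ^ 2 - Λ * t ^ (q - 2) - M * t ^ (p - 2)
    let t0 : ℝ := ((p - 2) * (p - q) * M / (2 * (4 - q) * B)) ^ ((1 : ℝ) / (4 - p))
    ∃ t1 : ℝ, 0 < t1 ∧ deriv T₁ t1 = 0 ∧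
      (∀ t : ℝ, 0 < t → deriv T₁ t = 0 → t = t1) ∧
      t0 < t1 ∧ StrictAntiOn T₁ (Ioo 0 t1) ∧ StrictMonoOn T₁ (Ioi t1) ∧
      (∀ t : ℝ, 0 < t → T₁ t1 ≤ T₁ t) ∧ T₁ t1 ≤ T₁ t0 ∧
      T₁ t0 = -((4 - p) * (p + 2 - q) / (2 * (4 - q))) * M *
          ((p - 2) * (p - q) * M / (2 * (4 - q) * B)) ^ ((p - 2) / (4 - p))
        - Λ * ((p - 2) * (p - q) * M / (2 * (4 - q) * B)) ^ ((q - 2) / (4 - p)) := by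
  intro T₁ t0
  have hA := fiberingScale_pos hq hqp hp hB hM
  have ht0 : 0 < t0 := rpow_pos_of_pos hA _
  have hT₁ : ∀ t > 0, HasDerivAt T₁ (t * (2 * B - fiberingSlope Λ M q p t)) t :=
    fun _ => hasDerivAt_fiberingMap
  have hg := strictAntiOn_fiberingSlope hq (by linarith) (by linarith) hp hΛ hM
  obtain ⟨t1, ht01 : t0 < t1, hgt1⟩ := exists_gt_eq_of_continuousOn_Ici_of_tendsto
    (continuousOn_fiberingSlope.mono fun _ ht => ht0.trans_le ht)
    (two_mul_lt_fiberingSlope_fiberingScale_rpow hq hqp hp hB hΛ hM)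
    (tendsto_fiberingSlope_atTop (by linarith) hp) (by linarith)
  have ht1 : 0 < t1 := ht0.trans ht01
  have hmin := isMinOn_Ioi_of_hasDerivAt_mul_sub hT₁ hg ht1 hgt1
  exact ⟨t1, ht1, (deriv_eq_zero_iff_of_hasDerivAt_mul_sub hT₁ hg ht1 hgt1 ht1).2 rfl,
    fun t ht => (deriv_eq_zero_iff_of_hasDerivAt_mul_sub hT₁ hg ht1 hgt1 ht).1, ht01,
    (strictAntiOn_Ioc_of_hasDerivAt_mul_sub hT₁ hg ht1 hgt1).mono Ioo_subset_Ioc_self,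
    (strictMonoOn_Ici_of_hasDerivAt_mul_sub hT₁ hg ht1 hgt1).mono Ioi_subset_Ici_self,
    fun _ ht => hmin ht, hmin ht0, (fiberingMap_rpow_one_div hp.ne hA).trans
      (by rw [mul_fiberingScale_sub (by linarith) hB.ne']; rfl)⟩
end

section
/- Let p ∈ (2,4), a > 0, b > 0, μ > 0, σ > 0, and define g : [0,∞) → ℝ by g(t) = (a/2)σt² + (b/4)σ²t⁴ − (μ/p)σt^p. Set t̃₃ = ((p−2)μ/(2bσ))^(1/(4−p)). If a − ((4−p)μ/2)·((p−2)μ/(2bσ))^((p−2)/(4−p)) < 0, then there exist unique numbers 0 < t̃₂ < t̃₃ < t̃₄ such that t̃₂ is the unique local maximum point of g on (0,∞), t̃₄ is the unique local minimum point of g on (0,∞), and g(t̃₂) = max{g(t) : 0 ≤ t < t̃₄}. -/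
/-!
Since `g'(t) = σ t F(t)` with `F(t) = a + bσt² − μt^(p−2)`, everything is read off the sign of `F`.
Its derivative `t^(p−3) (2bσ t^(4−p) − (p−2)μ)` changes sign only at `t̃₃`, so `F` decreases on
`[0, t̃₃]` and increases afterwards, while `F(0) = a > 0` and `F(t) → ∞`. The hypothesis says exactly
that `F(t̃₃) < 0`, so `F` has one zero `t̃₂ < t̃₃` and one zero `t̃₄ > t̃₃`, and `g` increases on
`[0, t̃₂]`, decreases on `[t̃₂, t̃₄]` and increases on `[t̃₄, ∞)`; all claims follow from this shape.
-/

open Real Set Filter Topology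

section LocalExtr

variable {α β : Type*} [TopologicalSpace α] [LinearOrder α] [Preorder β] {g : α → β} {s : Set α}
  {t : α}

theorem StrictMonoOn.not_isLocalMax_of_mem_nhdsGE [(𝓝[>] t).NeBot] (hg : StrictMonoOn g s)
    (hs : s ∈ 𝓝[≥] t) : ¬IsLocalMax g t := by
  intro hmax
  have hts : t ∈ s := mem_of_mem_nhdsWithin self_mem_Ici hs
  have hs' : ∀ᶠ x in 𝓝[>] t, x ∈ s := nhdsWithin_mono _ Ioi_subset_Ici_self hs
  obtain ⟨x, hxs, htx, hgx⟩ :=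
    (hs'.and <| eventually_mem_nhdsWithin.and <| hmax.filter_mono nhdsWithin_le_nhds).exists
  exact (hg hts hxs htx).not_ge hgx

theorem StrictAntiOn.not_isLocalMax_of_mem_nhdsLE [(𝓝[<] t).NeBot] (hg : StrictAntiOn g s)
    (hs : s ∈ 𝓝[≤] t) : ¬IsLocalMax g t := by
  intro hmax
  have hts : t ∈ s := mem_of_mem_nhdsWithin self_mem_Iic hs
  have hs' : ∀ᶠ x in 𝓝[<] t, x ∈ s := nhdsWithin_mono _ Iio_subset_Iic_self hs
  obtain ⟨x, hxs, hxt, hgx⟩ :=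
    (hs'.and <| eventually_mem_nhdsWithin.and <| hmax.filter_mono nhdsWithin_le_nhds).exists
  exact (hg hxs hts hxt).not_ge hgx

theorem StrictAntiOn.not_isLocalMin_of_mem_nhdsGE [(𝓝[>] t).NeBot] (hg : StrictAntiOn g s)
    (hs : s ∈ 𝓝[≥] t) : ¬IsLocalMin g t :=
  StrictMonoOn.not_isLocalMax_of_mem_nhdsGE (β := βᵒᵈ) hg hs

theorem StrictMonoOn.not_isLocalMin_of_mem_nhdsLE [(𝓝[<] t).NeBot] (hg : StrictMonoOn g s)
    (hs : s ∈ 𝓝[≤] t) : ¬IsLocalMin g t :=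
  StrictAntiOn.not_isLocalMax_of_mem_nhdsLE (β := βᵒᵈ) hg hs

end LocalExtr

structure IsUpDownUp (g : ℝ → ℝ) (l t₂ t₄ : ℝ) : Prop where
  left_lt : l < t₂
  lt_right : t₂ < t₄
  strictMonoOn_left : StrictMonoOn g (Icc l t₂)
  strictAntiOn_mid : StrictAntiOn g (Icc t₂ t₄)
  strictMonoOn_right : StrictMonoOn g (Ici t₄)

namespace IsUpDownUp

variable {g : ℝ → ℝ} {l t₂ t₄ : ℝ}

theorem isLocalMax (hg : IsUpDownUp g l t₂ t₄) : IsLocalMax g t₂ :=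
  isLocalMax_of_mono_anti' (Icc_mem_nhdsLE hg.left_lt) (Icc_mem_nhdsGE hg.lt_right)
    hg.strictMonoOn_left.monotoneOn hg.strictAntiOn_mid.antitoneOn

theorem isLocalMin (hg : IsUpDownUp g l t₂ t₄) : IsLocalMin g t₄ :=
  isLocalMin_of_anti_mono' (Icc_mem_nhdsLE hg.lt_right) self_mem_nhdsWithin
    hg.strictAntiOn_mid.antitoneOn hg.strictMonoOn_right.monotoneOn

theorem eq_of_isLocalMax (hg : IsUpDownUp g l t₂ t₄) {t : ℝ} (hlt : l < t)
    (ht : IsLocalMax g t) : t = t₂ := by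
  by_contra hne
  rcases lt_or_gt_of_ne hne with h₂ | h₂
  · exact hg.strictMonoOn_left.not_isLocalMax_of_mem_nhdsGE
      (Icc_mem_nhdsGE_of_mem ⟨hlt.le, h₂⟩) ht
  rcases le_or_gt t t₄ with h₄ | h₄
  · exact hg.strictAntiOn_mid.not_isLocalMax_of_mem_nhdsLE (Icc_mem_nhdsLE_of_mem ⟨h₂, h₄⟩) ht
  · exact hg.strictMonoOn_right.not_isLocalMax_of_mem_nhdsGE
      (mem_nhdsWithin_of_mem_nhds (Ici_mem_nhds h₄)) ht

theorem eq_of_isLocalMin (hg : IsUpDownUp g l t₂ t₄) {t : ℝ} (hlt : l < t)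
    (ht : IsLocalMin g t) : t = t₄ := by
  by_contra hne
  rcases lt_or_gt_of_ne hne with h₄ | h₄
  · rcases le_or_gt t t₂ with h₂ | h₂
    · exact hg.strictMonoOn_left.not_isLocalMin_of_mem_nhdsLE
        (Icc_mem_nhdsLE_of_mem ⟨hlt, h₂⟩) ht
    · exact hg.strictAntiOn_mid.not_isLocalMin_of_mem_nhdsGE
        (Icc_mem_nhdsGE_of_mem ⟨h₂.le, h₄⟩) ht
  · exact hg.strictMonoOn_right.not_isLocalMin_of_mem_nhdsLE
      (mem_nhdsWithin_of_mem_nhds (Ici_mem_nhds h₄)) ht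

theorem le_of_mem_Ico (hg : IsUpDownUp g l t₂ t₄) {t : ℝ} (ht : t ∈ Ico l t₄) : g t ≤ g t₂ := by
  rcases le_total t t₂ with h | h
  · exact hg.strictMonoOn_left.monotoneOn ⟨ht.1, h⟩ ⟨hg.left_lt.le, le_rfl⟩ h
  · exact hg.strictAntiOn_mid.antitoneOn ⟨le_rfl, hg.lt_right.le⟩ ⟨h, ht.2.le⟩ h

end IsUpDownUp

theorem exists_sign_change_of_strictAntiOn_of_strictMonoOn {F : ℝ → ℝ} {l m T : ℝ}
    (hlm : l ≤ m) (hmT : m ≤ T) (hF : ContinuousOn F (Icc l T))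
    (hanti : StrictAntiOn F (Icc l m)) (hmono : StrictMonoOn F (Ici m))
    (hl : 0 < F l) (hm : F m < 0) (hT : 0 < F T) :
    ∃ t₂ t₄, l < t₂ ∧ t₂ < m ∧ m < t₄ ∧ (∀ t ∈ Ico l t₂, 0 < F t) ∧
      (∀ t ∈ Ioo t₂ t₄, F t < 0) ∧ ∀ t ∈ Ioi t₄, 0 < F t := by
  obtain ⟨t₂, ⟨hlt₂, ht₂m⟩, hFt₂⟩ :=
    intermediate_value_Ioo' hlm (hF.mono (Icc_subset_Icc_right hmT)) ⟨hm, hl⟩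
  obtain ⟨t₄, ⟨hmt₄, -⟩, hFt₄⟩ :=
    intermediate_value_Ioo hmT (hF.mono (Icc_subset_Icc_left hlm)) ⟨hm, hT⟩
  refine ⟨t₂, t₄, hlt₂, ht₂m, hmt₄, fun t ht ↦ ?_, fun t ht ↦ ?_, fun t ht ↦ ?_⟩
  · rw [← hFt₂]
    exact hanti ⟨ht.1, ht.2.trans ht₂m |>.le⟩ ⟨hlt₂.le, ht₂m.le⟩ ht.2
  · rcases le_or_gt t m with htm | htm
    · rw [← hFt₂]
      exact hanti ⟨hlt₂.le, ht₂m.le⟩ ⟨hlt₂.le.trans ht.1.le, htm⟩ ht.1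
    · rw [← hFt₄]
      exact hmono htm.le hmt₄.le ht.2
  · rw [← hFt₄]
    exact hmono hmt₄.le (hmt₄.trans ht).le ht

noncomputable section BubbleEnergy

variable (p a b μ σ : ℝ)

def bubbleEnergy (t : ℝ) : ℝ := a / 2 * σ * t ^ 2 + b / 4 * σ ^ 2 * t ^ 4 - μ / p * σ * t ^ p

def bubbleFactor (t : ℝ) : ℝ := a + b * σ * t ^ 2 - μ * t ^ (p - 2)

variable {p a b μ σ}

theorem continuous_bubbleEnergy (hp : 0 ≤ p) : Continuous (bubbleEnergy p a b μ σ) := by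
  unfold bubbleEnergy
  have := Real.continuous_rpow_const hp
  fun_prop

theorem continuous_bubbleFactor (hp : 2 ≤ p) : Continuous (bubbleFactor p a b μ σ) := by
  unfold bubbleFactor
  have := Real.continuous_rpow_const (sub_nonneg.2 hp)
  fun_prop

theorem hasDerivAt_bubbleEnergy (hp : p ≠ 0) {t : ℝ} (ht : 0 < t) :
    HasDerivAt (bubbleEnergy p a b μ σ) (σ * t * bubbleFactor p a b μ σ t) t := by
  have hrpow : t ^ (p - 1) = t ^ (p - 2) * t := by
    rw [← Real.rpow_add_one ht.ne']; ring_nf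
  have h := (((hasDerivAt_pow 2 t).const_mul (a / 2 * σ)).add
    ((hasDerivAt_pow 4 t).const_mul (b / 4 * σ ^ 2))).sub
    ((Real.hasDerivAt_rpow_const (p := p) (Or.inl ht.ne')).const_mul (μ / p * σ))
  refine h.congr_deriv ?_
  rw [bubbleFactor, hrpow]
  field_simp
  ring

theorem hasDerivAt_bubbleFactor {t : ℝ} (ht : 0 < t) :
    HasDerivAt (bubbleFactor p a b μ σ)
      (t ^ (p - 3) * (2 * b * σ * t ^ (4 - p) - (p - 2) * μ)) t := by
  have hrpow : t ^ (p - 3) * t ^ (4 - p) = t := by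
    rw [← Real.rpow_add ht]; norm_num
  have h := (((hasDerivAt_pow 2 t).const_mul (b * σ)).const_add a).sub
    ((Real.hasDerivAt_rpow_const (p := p - 2) (Or.inl ht.ne')).const_mul μ)
  refine h.congr_deriv ?_
  rw [show p - 2 - 1 = p - 3 by ring]
  linear_combination (-(2 * b * σ)) * hrpow

theorem bubbleFactor_zero (hp : 2 < p) : bubbleFactor p a b μ σ 0 = a := by
  simp [bubbleFactor, Real.zero_rpow (sub_ne_zero.2 hp.ne')]

theorem bubbleFactor_eq_add_rpow_mul {t : ℝ} (ht : 0 ≤ t) :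
    bubbleFactor p a b μ σ t = a + t ^ (p - 2) * (b * σ * t ^ (4 - p) - μ) := by
  have hrpow : t ^ (p - 2) * t ^ (4 - p) = t ^ 2 := by
    rw [← Real.rpow_add' ht (by norm_num)]; norm_num
  rw [bubbleFactor]
  linear_combination (-(b * σ)) * hrpow

theorem bubbleFactor_eq_of_critical {t₃ : ℝ} (ht₃ : 0 ≤ t₃)
    (hcrit : 2 * b * σ * t₃ ^ (4 - p) = (p - 2) * μ) :
    bubbleFactor p a b μ σ t₃ = a - (4 - p) * μ / 2 * t₃ ^ (p - 2) := by
  rw [bubbleFactor_eq_add_rpow_mul ht₃]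
  linear_combination t₃ ^ (p - 2) / 2 * hcrit

theorem strictAntiOn_bubbleFactor (hp2 : 2 ≤ p) (hp4 : p < 4) (hbσ : 0 < b * σ) {t₃ : ℝ}
    (hcrit : 2 * b * σ * t₃ ^ (4 - p) = (p - 2) * μ) :
    StrictAntiOn (bubbleFactor p a b μ σ) (Icc 0 t₃) := by
  refine strictAntiOn_of_deriv_neg (convex_Icc 0 t₃)
    (continuous_bubbleFactor hp2).continuousOn ?_
  rw [interior_Icc]
  rintro x ⟨hx0, hxt₃⟩
  rw [(hasDerivAt_bubbleFactor hx0).deriv]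
  have hpow : x ^ (4 - p) < t₃ ^ (4 - p) := Real.rpow_lt_rpow hx0.le hxt₃ (by linarith)
  have hsign : 2 * b * σ * x ^ (4 - p) - (p - 2) * μ < 0 := by nlinarith
  exact mul_neg_of_pos_of_neg (Real.rpow_pos_of_pos hx0 _) hsign

theorem strictMonoOn_bubbleFactor (hp2 : 2 ≤ p) (hp4 : p < 4) (hbσ : 0 < b * σ) {t₃ : ℝ}
    (ht₃ : 0 ≤ t₃) (hcrit : 2 * b * σ * t₃ ^ (4 - p) = (p - 2) * μ) :
    StrictMonoOn (bubbleFactor p a b μ σ) (Ici t₃) := by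
  refine strictMonoOn_of_deriv_pos (convex_Ici t₃)
    (continuous_bubbleFactor hp2).continuousOn ?_
  rw [interior_Ici]
  intro x hx
  have hx0 : 0 < x := ht₃.trans_lt hx
  rw [(hasDerivAt_bubbleFactor hx0).deriv]
  have hpow : t₃ ^ (4 - p) < x ^ (4 - p) := Real.rpow_lt_rpow ht₃ hx (by linarith)
  have hsign : 0 < 2 * b * σ * x ^ (4 - p) - (p - 2) * μ := by nlinarith
  exact mul_pos (Real.rpow_pos_of_pos hx0 _) hsign

theorem exists_le_bubbleFactor_pos (hp4 : p < 4) (ha : 0 < a) (hbσ : 0 < b * σ) (hμ : 0 ≤ μ)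
    (x : ℝ) : ∃ T, x ≤ T ∧ 0 < bubbleFactor p a b μ σ T := by
  set M := (μ / (b * σ)) ^ (4 - p)⁻¹
  have hM : 0 ≤ M := Real.rpow_nonneg (div_nonneg hμ hbσ.le) _
  refine ⟨max x M, le_max_left x M, ?_⟩
  have hT : 0 ≤ max x M := hM.trans (le_max_right x M)
  have hlarge : μ ≤ b * σ * max x M ^ (4 - p) := by
    rw [← div_le_iff₀' hbσ, ← Real.rpow_inv_le_iff_of_pos (div_nonneg hμ hbσ.le) hT
      (by linarith)]
    exact le_max_right x M
  rw [bubbleFactor_eq_add_rpow_mul hT]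
  have := mul_nonneg (Real.rpow_nonneg hT (p - 2)) (sub_nonneg.2 hlarge)
  linarith

theorem strictMonoOn_bubbleEnergy (hp : 0 < p) (hσ : 0 < σ) {s : Set ℝ} (hs : Convex ℝ s)
    (hs0 : s ⊆ Ici 0) (hF : ∀ t ∈ interior s, 0 < bubbleFactor p a b μ σ t) :
    StrictMonoOn (bubbleEnergy p a b μ σ) s := by
  have hint : interior s ⊆ Ioi 0 := interior_Ici (a := (0 : ℝ)) ▸ interior_mono hs0
  exact strictMonoOn_of_hasDerivWithinAt_pos hs (continuous_bubbleEnergy hp.le).continuousOn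
    (fun t ht ↦ (hasDerivAt_bubbleEnergy hp.ne' (hint ht)).hasDerivWithinAt)
    (fun t ht ↦ mul_pos (mul_pos hσ (hint ht)) (hF t ht))

theorem strictAntiOn_bubbleEnergy (hp : 0 < p) (hσ : 0 < σ) {s : Set ℝ} (hs : Convex ℝ s)
    (hs0 : s ⊆ Ici 0) (hF : ∀ t ∈ interior s, bubbleFactor p a b μ σ t < 0) :
    StrictAntiOn (bubbleEnergy p a b μ σ) s := by
  have hint : interior s ⊆ Ioi 0 := interior_Ici (a := (0 : ℝ)) ▸ interior_mono hs0
  exact strictAntiOn_of_hasDerivWithinAt_neg hs (continuous_bubbleEnergy hp.le).continuousOn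
    (fun t ht ↦ (hasDerivAt_bubbleEnergy hp.ne' (hint ht)).hasDerivWithinAt)
    (fun t ht ↦ mul_neg_of_pos_of_neg (mul_pos hσ (hint ht)) (hF t ht))

theorem exists_isUpDownUp_bubbleEnergy (hp2 : 2 < p) (hp4 : p < 4) (ha : 0 < a) (hb : 0 < b)
    (hμ : 0 ≤ μ) (hσ : 0 < σ) {t₃ : ℝ} (ht₃ : 0 ≤ t₃)
    (hcrit : 2 * b * σ * t₃ ^ (4 - p) = (p - 2) * μ) (hneg : bubbleFactor p a b μ σ t₃ < 0) :
    ∃ t₂ t₄, t₂ < t₃ ∧ t₃ < t₄ ∧ IsUpDownUp (bubbleEnergy p a b μ σ) 0 t₂ t₄ := by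
  have hbσ : 0 < b * σ := mul_pos hb hσ
  obtain ⟨T, hT, hFT⟩ := exists_le_bubbleFactor_pos hp4 ha hbσ hμ t₃
  obtain ⟨t₂, t₄, ht₂, ht₂₃, ht₃₄, hpos_left, hneg_mid, hpos_right⟩ :=
    exists_sign_change_of_strictAntiOn_of_strictMonoOn ht₃ hT
      (continuous_bubbleFactor hp2.le).continuousOn
      (strictAntiOn_bubbleFactor hp2.le hp4 hbσ hcrit)
      (strictMonoOn_bubbleFactor hp2.le hp4 hbσ ht₃ hcrit)
      (by rwa [bubbleFactor_zero hp2]) hneg hFT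
  have hp : 0 < p := by linarith
  refine ⟨t₂, t₄, ht₂₃, ht₃₄, ht₂, ht₂₃.trans ht₃₄, ?_, ?_, ?_⟩
  · refine strictMonoOn_bubbleEnergy hp hσ (convex_Icc 0 t₂) Icc_subset_Ici_self ?_
    rw [interior_Icc]
    exact fun t ht ↦ hpos_left t (Ioo_subset_Ico_self ht)
  · refine strictAntiOn_bubbleEnergy hp hσ (convex_Icc t₂ t₄)
      (fun t ht ↦ ht₂.le.trans ht.1) ?_
    rw [interior_Icc]
    exact hneg_mid
  · refine strictMonoOn_bubbleEnergy hp hσ (convex_Ici t₄)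
      (Ici_subset_Ici.2 (ht₂.trans (ht₂₃.trans ht₃₄)).le) ?_
    rw [interior_Ici]
    exact hpos_right

end BubbleEnergy

/-- For `p ∈ (2,4)`, `a, b, μ, σ > 0`,
`g t = (a/2)σt² + (b/4)σ²t⁴ − (μ/p)σt^p` and `t̃₃ = ((p−2)μ/(2bσ))^(1/(4−p))`,
if `a − ((4−p)μ/2)·((p−2)μ/(2bσ))^((p−2)/(4−p)) < 0` then there exist unique
`0 < t̃₂ < t̃₃ < t̃₄` with `t̃₂` the unique local maximum point of `g` on `(0,∞)`,
`t̃₄` the unique local minimum point of `g` on `(0,∞)`, and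
`g t̃₂ = max {g t : 0 ≤ t < t̃₄}`. -/
theorem stmt_6 (p a b μ σ : ℝ) (hp2 : 2 < p) (hp4 : p < 4)
    (ha : 0 < a) (hb : 0 < b) (hμ : 0 < μ) (hσ : 0 < σ)
    (h : a - (4 - p) * μ / 2 * ((p - 2) * μ / (2 * b * σ)) ^ ((p - 2) / (4 - p)) < 0) :
    let g : ℝ → ℝ := fun t => a / 2 * σ * t ^ 2 + b / 4 * σ ^ 2 * t ^ 4 - μ / p * σ * t ^ p
    let t3 : ℝ := ((p - 2) * μ / (2 * b * σ)) ^ ((1 : ℝ) / (4 - p))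
    ∃ t2 t4 : ℝ, 0 < t2 ∧ t2 < t3 ∧ t3 < t4 ∧
      IsLocalMax g t2 ∧ (∀ t : ℝ, 0 < t → IsLocalMax g t → t = t2) ∧
      IsLocalMin g t4 ∧ (∀ t : ℝ, 0 < t → IsLocalMin g t → t = t4) ∧
      (∀ t : ℝ, 0 ≤ t → t < t4 → g t ≤ g t2) := by
  intro g t3
  set c := (p - 2) * μ / (2 * b * σ)
  have hc : 0 ≤ c := div_nonneg (mul_nonneg (by linarith) hμ.le) (by positivity)
  have ht3_eq : t3 = c ^ ((1 : ℝ) / (4 - p)) := rfl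
  have ht3 : 0 ≤ t3 := Real.rpow_nonneg hc _
  have hcrit : 2 * b * σ * t3 ^ (4 - p) = (p - 2) * μ := by
    rw [ht3_eq, one_div, Real.rpow_inv_rpow hc (by linarith)]
    simp only [c]
    field_simp
  have hneg : bubbleFactor p a b μ σ t3 < 0 := by
    rwa [bubbleFactor_eq_of_critical ht3 hcrit, ht3_eq, ← Real.rpow_mul hc, one_div_mul_eq_div]
  obtain ⟨t2, t4, ht23, ht34, hg⟩ :=
    exists_isUpDownUp_bubbleEnergy hp2 hp4 ha hb hμ.le hσ ht3 hcrit hneg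
  exact ⟨t2, t4, hg.left_lt, ht23, ht34, hg.isLocalMax, fun _ ht ↦ hg.eq_of_isLocalMax ht,
    hg.isLocalMin, fun _ ht ↦ hg.eq_of_isLocalMin ht, fun _ h0 h4 ↦ hg.le_of_mem_Ico ⟨h0, h4⟩⟩
end

section
/- Let 2 < q < p < 4 and let A, B be real numbers and Λ ≥ 0, M ≥ 0 be nonnegative real numbers satisfying A + B − Λ − M = 0 and A + 3B − (q−1)Λ − (p−1)M < 0. Then (A/2) + (B/4) − (Λ/q) − (M/p) > ((q−2)/(4q))·A. -/
/-- For `2 < q < p < 4`, reals `A, B` and nonnegative `Λ, M` with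
`A + B − Λ − M = 0` and `A + 3B − (q−1)Λ − (p−1)M < 0`, one has
`A/2 + B/4 − Λ/q − M/p > ((q−2)/(4q))·A`. -/
theorem stmt_10 (q p A B Λ M : ℝ) (hq : 2 < q) (hqp : q < p) (hp : p < 4)
    (hΛ : 0 ≤ Λ) (hM : 0 ≤ M)
    (h1 : A + B - Λ - M = 0) (h2 : A + 3 * B - (q - 1) * Λ - (p - 1) * M < 0) :
    (q - 2) / (4 * q) * A < A / 2 + B / 4 - Λ / q - M / p := by
  have hq0 : (0:ℝ) < q := by linarith
  have hp0 : (0:ℝ) < p := by linarith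
  have hB : B = Λ + M - A := by linarith
  subst hB
  have key : (4 - q) * Λ + (4 - p) * M < 2 * A := by nlinarith [h2]
  have t1 : 0 < (2*A - (4-q)*Λ - (4-p)*M)/(4*q) := div_pos (by linarith) (by linarith)
  have t2 : 0 ≤ (4-p)*M*(1/(4*q) - 1/(4*p)) := by
    apply mul_nonneg (mul_nonneg (by linarith) hM)
    have : 1/(4*p) ≤ 1/(4*q) := by
      apply one_div_le_one_div_of_le (by linarith) (by linarith)
    linarith
  rw [← sub_pos]
  have expand : A / 2 + (Λ + M - A) / 4 - Λ / q - M / p - (q - 2) / (4 * q) * A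
      = (2*A - (4-q)*Λ - (4-p)*M)/(4*q) + (4-p)*M*(1/(4*q) - 1/(4*p)) := by
    field_simp
    ring
  rw [expand]
  linarith
end

section
/- Let p ∈ (2,4) and A, b, d > 0. If there exists a real number x > 0 such that A·x² + b·x⁴ ≤ d·x^p, then A·(A/d)^(2/(p−2)) ≤ (d·b^(−p/4))^(4/(4−p)). -/
open Real

/-! Each term on the left is at most `d x^p` on its own: `A x² ≤ d x^p` bounds `x` below by
`x^(p-2) ≥ A/d`, and `b x⁴ ≤ d x^p` bounds it above by `x^(4-p) ≤ d/b`. Hence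
`A (A/d)^(2/(p-2)) ≤ A x² ≤ d x^p ≤ d (d/b)^(p/(4-p))`, and the last quantity is the
right-hand side rewritten. -/

theorem rpow_rpow_div {x : ℝ} (hx : 0 ≤ x) {e : ℝ} (he : e ≠ 0) (r : ℝ) :
    (x ^ e) ^ (r / e) = x ^ r := by
  rw [← rpow_mul hx, mul_div_cancel₀ r he]

theorem rpow_div_le_of_le_rpow {u x e r : ℝ} (hu : 0 ≤ u) (hx : 0 ≤ x) (he : 0 < e)
    (hr : 0 ≤ r) (h : u ≤ x ^ e) : u ^ (r / e) ≤ x ^ r :=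
  rpow_rpow_div hx he.ne' r ▸ rpow_le_rpow hu h (div_nonneg hr he.le)

theorem rpow_le_rpow_div_of_rpow_le {u x e r : ℝ} (hx : 0 ≤ x) (he : 0 < e)
    (hr : 0 ≤ r) (h : x ^ e ≤ u) : x ^ r ≤ u ^ (r / e) :=
  rpow_rpow_div hx he.ne' r ▸ rpow_le_rpow (rpow_nonneg hx e) h (div_nonneg hr he.le)

theorem mul_rpow_neg_div_four_rpow {b d p : ℝ} (hb : 0 < b) (hd : 0 < d) (hp : p ≠ 4) :
    (d * b ^ (-p / 4)) ^ (4 / (4 - p)) = d * (d / b) ^ (p / (4 - p)) := by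
  have h4p : 4 - p ≠ 0 := sub_ne_zero.mpr hp.symm
  have hexp : 4 / (4 - p) = 1 + p / (4 - p) := by field_simp; ring
  rw [mul_rpow hd.le (rpow_nonneg hb.le _), ← rpow_mul hb.le, div_rpow hd.le hb.le, hexp,
    rpow_add hd, rpow_one, show -p / 4 * (1 + p / (4 - p)) = -(p / (4 - p)) by field_simp; ring,
    rpow_neg hb.le]
  ring

/-- For `p ∈ (2,4)` and `A, b, d > 0`, if there exists `x > 0` with
`A·x² + b·x⁴ ≤ d·x^p`, then `A·(A/d)^(2/(p−2)) ≤ (d·b^(−p/4))^(4/(4−p))`. -/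
theorem stmt_17 (p A b d : ℝ) (hp2 : 2 < p) (hp4 : p < 4)
    (hA : 0 < A) (hb : 0 < b) (hd : 0 < d)
    (h : ∃ x : ℝ, 0 < x ∧ A * x ^ 2 + b * x ^ 4 ≤ d * x ^ p) :
    A * (A / d) ^ (2 / (p - 2)) ≤ (d * b ^ (-p / 4)) ^ (4 / (4 - p)) := by
  obtain ⟨x, hx, hle⟩ := h
  have hxp : 0 < x ^ p := rpow_pos_of_pos hx p
  have hlower : A / d ≤ x ^ (p - 2) := by
    rw [rpow_sub hx, rpow_two, div_le_div_iff₀ hd (by positivity)]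
    nlinarith [pow_pos hx 4]
  have hupper : x ^ (4 - p) ≤ d / b := by
    rw [rpow_sub hx, show (4 : ℝ) = (4 : ℕ) by norm_num, rpow_natCast, div_le_div_iff₀ hxp hb]
    nlinarith [pow_pos hx 2]
  calc A * (A / d) ^ (2 / (p - 2))
      ≤ A * x ^ (2 : ℝ) := by
        gcongr
        exact rpow_div_le_of_le_rpow (by positivity) hx.le (by linarith) zero_le_two hlower
    _ ≤ d * x ^ p := by rw [rpow_two]; nlinarith [pow_pos hx 4]
    _ ≤ d * (d / b) ^ (p / (4 - p)) := by
        gcongr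
        exact rpow_le_rpow_div_of_rpow_le hx.le (by linarith) (by linarith) hupper
    _ = (d * b ^ (-p / 4)) ^ (4 / (4 - p)) := (mul_rpow_neg_div_four_rpow hb hd hp4.ne).symm
end

section
/- Let 2 < q < p < 4 and a, b, c, d > 0. If b ≥ (c·(2/a)^((4−q)/2))^(2/(q−2)) + (d·(2/a)^((4−p)/2))^(2/(p−2)), then for every real x > 0: a·x² + b·x⁴ > c·x^q + d·x^p. In particular, the equation a·x² + b·x⁴ = c·x^q + d·x^p has no positive solution. -/
open Real

private lemma key_ineq (q a c : ℝ) (hq2 : 2 < q) (hq4 : q < 4) (ha : 0 < a) (hc : 0 < c)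
    (x : ℝ) (hx : 0 < x) :
    c * x ^ q < a / 2 * x ^ 2 + (c * (2 / a) ^ ((4 - q) / 2)) ^ (2 / (q - 2)) * x ^ 4 := by
  have hθ : (0:ℝ) < (4 - q) / 2 := by linarith
  have hθ1 : (4 - q) / 2 < 1 := by linarith
  have h1θ : (0:ℝ) < (q - 2) / 2 := by linarith
  have h1θ1 : (q - 2) / 2 < 1 := by linarith
  have hZ : (0:ℝ) < c * (2 / a) ^ ((4 - q) / 2) := by positivity
  set b₁ : ℝ := (c * (2 / a) ^ ((4 - q) / 2)) ^ (2 / (q - 2)) with hb₁def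
  have hb₁ : 0 < b₁ := Real.rpow_pos_of_pos hZ _
  have hsum : (4 - q) / 2 + (q - 2) / 2 = 1 := by ring
  have hgm := Real.geom_mean_le_arith_mean2_weighted hθ.le h1θ.le
    (by positivity : (0:ℝ) ≤ a / 2) (by positivity : (0:ℝ) ≤ b₁ * x ^ 2) hsum
  -- compute b₁ ^ ((q-2)/2)
  have hb₁pow : b₁ ^ ((q - 2) / 2) = c * (2 / a) ^ ((4 - q) / 2) := by
    rw [hb₁def, ← Real.rpow_mul hZ.le]
    have hne : q - 2 ≠ 0 := by linarith
    have h1 : 2 / (q - 2) * ((q - 2) / 2) = 1 := by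
      field_simp
    rw [h1, Real.rpow_one]
  -- compute (x^2) ^ ((q-2)/2)
  have hx2pow : (x ^ 2) ^ ((q - 2) / 2) = x ^ (q - 2) := by
    rw [← Real.rpow_natCast x 2, ← Real.rpow_mul hx.le]
    congr 1
    ring
  have hgml : (a / 2) ^ ((4 - q) / 2) * (b₁ * x ^ 2) ^ ((q - 2) / 2) = c * x ^ (q - 2) := by
    rw [Real.mul_rpow hb₁.le (by positivity), hb₁pow, hx2pow,
      ← mul_assoc, ← mul_assoc, mul_comm ((a/2) ^ ((4-q)/2)) c, mul_assoc c,
      ← Real.mul_rpow (by positivity) (by positivity)]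
    have : a / 2 * (2 / a) = 1 := by field_simp
    rw [this, Real.one_rpow, mul_one]
  rw [hgml] at hgm
  have hstep : c * x ^ (q - 2) < a / 2 + b₁ * x ^ 2 := by
    have h1 : (4 - q) / 2 * (a / 2) < a / 2 := by nlinarith
    have h2 : (q - 2) / 2 * (b₁ * x ^ 2) < b₁ * x ^ 2 := by nlinarith [mul_pos hb₁ (sq_pos_of_pos hx)]
    linarith
  have hmul := mul_lt_mul_of_pos_right hstep (pow_pos hx 2)
  have hxq : x ^ (q - 2) * x ^ (2:ℕ) = x ^ q := by
    rw [← Real.rpow_natCast x 2, ← Real.rpow_add hx]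
    norm_num
  calc c * x ^ q = c * x ^ (q - 2) * x ^ 2 := by rw [mul_assoc, hxq]
    _ < (a / 2 + b₁ * x ^ 2) * x ^ 2 := hmul
    _ = a / 2 * x ^ 2 + b₁ * x ^ 4 := by ring

/-- For `2 < q < p < 4` and `a, b, c, d > 0`, if
`b ≥ (c·(2/a)^((4−q)/2))^(2/(q−2)) + (d·(2/a)^((4−p)/2))^(2/(p−2))`, then for every
`x > 0` one has `a·x² + b·x⁴ > c·x^q + d·x^p`; in particular the equation
`a·x² + b·x⁴ = c·x^q + d·x^p` has no positive solution. -/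
theorem stmt_19 (q p a b c d : ℝ) (hq : 2 < q) (hqp : q < p) (hp : p < 4)
    (ha : 0 < a) (hb : 0 < b) (hc : 0 < c) (hd : 0 < d)
    (h : (c * (2 / a) ^ ((4 - q) / 2)) ^ (2 / (q - 2)) +
          (d * (2 / a) ^ ((4 - p) / 2)) ^ (2 / (p - 2)) ≤ b) :
    (∀ x : ℝ, 0 < x → c * x ^ q + d * x ^ p < a * x ^ 2 + b * x ^ 4) ∧
      ¬∃ x : ℝ, 0 < x ∧ a * x ^ 2 + b * x ^ 4 = c * x ^ q + d * x ^ p := by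
  have main : ∀ x : ℝ, 0 < x → c * x ^ q + d * x ^ p < a * x ^ 2 + b * x ^ 4 := by
    intro x hx
    have h1 := key_ineq q a c hq (hqp.trans hp) ha hc x hx
    have h2 := key_ineq p a d (hq.trans hqp) hp ha hd x hx
    have hx4 : (0:ℝ) < x ^ 4 := pow_pos hx 4
    nlinarith
  refine ⟨main, ?_⟩
  rintro ⟨x, hx, heq⟩
  exact (main x hx).ne' heq
end
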